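/- Let e_1, …, e_5 be the standard unit vectors of R^5 and let X ∈ S^6_+ be the Gram matrix of the vectors e_1, e_2, e_3, e_4, e_5, (e_1 + e_2)/√2, labeling the vertices 1, …, 6 respectively. Then X is the unique positive semidefinite 6×6 matrix that agrees with X on all diagonal entries and on all entries indexed by edges of K_{2,2,2}; in particular, every positive semidefinite completion of this partial K_{2,2,2}-matrix has rank 5. -/

import Mathlib

open Matrix Finset

/-- The complete tripartite graph `K_{2,2,2}`: `K_6` minus the perfect matching
`(1,4), (2,5), (3,6)` (here on vertices `0, …, 5`, minus `(0,3), (1,4), (2,5)`). -/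
def K222 : SimpleGraph (Fin 6) :=
  (⊤ : SimpleGraph (Fin 6)).deleteEdges {s(0, 3), s(1, 4), s(2, 5)}

/-- The vectors `e₁, e₂, e₃, e₄, e₅, (e₁ + e₂)/√2` of `ℝ⁵`, labeling the six vertices
of `K_{2,2,2}`. -/
noncomputable def gramVecs : Fin 6 → (Fin 5 → ℝ) :=
  ![Pi.single 0 1, Pi.single 1 1, Pi.single 2 1, Pi.single 3 1, Pi.single 4 1,
    (Real.sqrt 2)⁻¹ • (Pi.single 0 1 + Pi.single 1 1)]

/-- The Gram matrix `X` of the vectors `e₁, e₂, e₃, e₄, e₅, (e₁ + e₂)/√2`. -/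
noncomputable def gramX : Matrix (Fin 6) (Fin 6) ℝ :=
  Matrix.of fun i j => ∑ t, gramVecs i t * gramVecs j t

/-!
The vectors satisfy `p₁ + p₂ = √2 p₆`, so `v = (1, 1, 0, 0, 0, -√2)` lies in the kernel of `X`.
The quadratic form `vᵀ X' v` only involves entries of `X'` indexed by the triangle `{1, 2, 6}`
of `K_{2,2,2}`, where `X'` agrees with `X`; hence `vᵀ X' v = 0`, and positive semidefiniteness
gives `X' v = 0 = X v`. Every vertex of `K_{2,2,2}` has exactly one non-neighbour and every
non-edge has an endpoint in the triangle, so in the appropriate row of `X' v = X v` the missing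
entry is the only unknown and has a nonzero coefficient: it is forced to equal that of `X`.
The rank of `X` is the rank of the `6 × 5` matrix of the vectors, which contains `e₁, …, e₅`.
-/

namespace Matrix

variable {n R : Type*} [Fintype n]

theorem dotProduct_mulVec_eq_of_eqOn_support [CommSemiring R] {A B : Matrix n n R} {u v : n → R}
    (hAB : ∀ i j, u i ≠ 0 → v j ≠ 0 → A i j = B i j) : u ⬝ᵥ A *ᵥ v = u ⬝ᵥ B *ᵥ v := by
  refine Finset.sum_congr rfl fun i _ => ?_
  by_cases hi : u i = 0
  · simp [hi]
  refine congrArg (u i * ·) (Finset.sum_congr rfl fun j _ => ?_)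
  by_cases hj : v j = 0
  · simp [hj]
  simp only [hAB i j hi hj]

open scoped ComplexOrder in
theorem PosSemidef.mulVec_eq_zero_of_eqOn_support {𝕜 : Type*} [RCLike 𝕜] {A B : Matrix n n 𝕜}
    (hA : A.PosSemidef) {v : n → 𝕜} (hB : B *ᵥ v = 0)
    (hAB : ∀ i j, v i ≠ 0 → v j ≠ 0 → A i j = B i j) : A *ᵥ v = 0 := by
  rw [← hA.dotProduct_mulVec_zero_iff, dotProduct_mulVec_eq_of_eqOn_support, hB, dotProduct_zero]
  intro i j hi hj
  exact hAB i j (by simpa using hi) hj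

theorem apply_eq_of_mulVec_eq {m : Type*} [CommRing R] [NoZeroDivisors R] {A B : Matrix m n R}
    {v : n → R} (h : A *ᵥ v = B *ᵥ v) {i : m} {k : n} (hk : v k ≠ 0)
    (hrow : ∀ j, j ≠ k → A i j = B i j) : A i k = B i k := by
  have hrow_i : ((A - B) *ᵥ v) i = 0 := by rw [sub_mulVec, h, sub_self, Pi.zero_apply]
  rw [mulVec, dotProduct, Fintype.sum_eq_single k fun j hj => by simp [hrow j hj]] at hrow_i
  exact sub_eq_zero.1 ((mul_eq_zero.1 hrow_i).resolve_right hk)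

end Matrix

theorem K222_adj_iff {i j : Fin 6} : K222.Adj i j ↔ (i : ℕ) % 3 ≠ (j : ℕ) % 3 := by
  fin_cases i <;> fin_cases j <;> simp [K222]

theorem K222_eq_or_adj_of_not_adj {i j k : Fin 6} (hik : ¬(i = k ∨ K222.Adj i k)) (hjk : j ≠ k) :
    i = j ∨ K222.Adj i j := by
  simp only [K222_adj_iff] at hik ⊢
  revert i j k
  decide

noncomputable def gramMat : Matrix (Fin 6) (Fin 5) ℝ := Matrix.of gramVecs

theorem gramX_eq_gramMat_mul_transpose : gramX = gramMat * gramMatᵀ := by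
  ext i j
  simp [gramX, gramMat, Matrix.mul_apply]

theorem gramX_posSemidef : gramX.PosSemidef := by
  rw [gramX_eq_gramMat_mul_transpose, ← conjTranspose_eq_transpose_of_trivial]
  exact posSemidef_self_mul_conjTranspose _

theorem gramMat_submatrix_castSucc : gramMat.submatrix Fin.castSucc id = 1 := by
  ext i j
  fin_cases i <;> simp [gramMat, gramVecs, Pi.single_apply, one_apply, eq_comm]

theorem gramX_rank : gramX.rank = 5 := by
  have hlow : 5 ≤ gramMat.rank := by
    simpa [gramMat_submatrix_castSucc] using gramMat.rank_submatrix_le Fin.castSucc id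
  rw [gramX_eq_gramMat_mul_transpose, rank_self_mul_transpose]
  exact le_antisymm gramMat.rank_le_width hlow

theorem gramVecs_add : gramVecs 0 + gramVecs 1 = √2 • gramVecs 5 := by
  simp [gramVecs, smul_smul]

noncomputable def gramKerVec : Fin 6 → ℝ := ![1, 1, 0, 0, 0, -√2]

theorem gramX_mulVec_gramKerVec : gramX *ᵥ gramKerVec = 0 := by
  have : gramMatᵀ *ᵥ gramKerVec = 0 := by
    rw [mulVec_transpose, vecMul_eq_sum]
    change ∑ i, gramKerVec i • gramVecs i = 0
    simp [Fin.sum_univ_six, gramKerVec, gramVecs_add]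
  rw [gramX_eq_gramMat_mul_transpose, ← mulVec_mulVec, this, mulVec_zero]

theorem gramKerVec_ne_zero_iff {i : Fin 6} : gramKerVec i ≠ 0 ↔ i = 0 ∨ i = 1 ∨ i = 5 := by
  fin_cases i <;> simp [gramKerVec]

theorem K222_eq_or_adj_of_gramKerVec_ne_zero {i j : Fin 6} (hi : gramKerVec i ≠ 0)
    (hj : gramKerVec j ≠ 0) : i = j ∨ K222.Adj i j := by
  rw [gramKerVec_ne_zero_iff] at hi hj
  rw [K222_adj_iff]
  revert i j
  decide

theorem gramKerVec_ne_zero_or_ne_zero_of_not_adj {i k : Fin 6} (hik : ¬(i = k ∨ K222.Adj i k)) :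
    gramKerVec i ≠ 0 ∨ gramKerVec k ≠ 0 := by
  simp only [gramKerVec_ne_zero_iff, K222_adj_iff] at hik ⊢
  revert i k
  decide

theorem gramX_unique_psd_completion :
    gramX.PosSemidef ∧
    (∀ X' : Matrix (Fin 6) (Fin 6) ℝ, X'.PosSemidef →
      (∀ i, X' i i = gramX i i) → (∀ i j, K222.Adj i j → X' i j = gramX i j) →
      X' = gramX ∧ X'.rank = 5) := by
  refine ⟨gramX_posSemidef, fun X' hX' hdiag hedge => ?_⟩
  have hknown : ∀ i j, i = j ∨ K222.Adj i j → X' i j = gramX i j := by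
    rintro i j (rfl | hij)
    exacts [hdiag i, hedge i j hij]
  have hker : X' *ᵥ gramKerVec = gramX *ᵥ gramKerVec := by
    rw [gramX_mulVec_gramKerVec]
    exact hX'.mulVec_eq_zero_of_eqOn_support gramX_mulVec_gramKerVec
      fun i j hi hj => hknown i j (K222_eq_or_adj_of_gramKerVec_ne_zero hi hj)
  have hcol : ∀ i k, gramKerVec k ≠ 0 → X' i k = gramX i k := by
    intro i k hk
    by_cases hik : i = k ∨ K222.Adj i k
    · exact hknown i k hik
    exact apply_eq_of_mulVec_eq hker hk fun j hj => hknown i j (K222_eq_or_adj_of_not_adj hik hj)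
  have heq : X' = gramX := by
    ext i k
    by_cases hik : i = k ∨ K222.Adj i k
    · exact hknown i k hik
    rcases gramKerVec_ne_zero_or_ne_zero_of_not_adj hik with hi | hk
    · rw [← hX'.isHermitian.apply, ← gramX_posSemidef.isHermitian.apply, hcol k i hi]
    · exact hcol i k hk
  exact ⟨heq, heq ▸ gramX_rank⟩
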